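/- Let k be a field, n ≥ 1 a natural number, and S = k[x_1,...,x_n] the polynomial ring in n variables over k. Let M be an ideal of S generated by finitely many squarefree monomials each of total degree at least 2 (for example, an edge ideal of a graph, generated by monomials x_i·x_j with i ≠ j). Then the projective dimension of the S-module S/M is at most n − 1. -/

import Mathlib

open CategoryTheory MvPolynomial


universe u

section PdTheory

variable (R : Type u) [CommRing R]

/-- Projective dimension at most `d` (via iterated syzygies). -/
def PdLe : ℕ → ModuleCat.{u} R → Prop
  | 0, N => Module.Projective R N
  | (d+1), N => ∃ (P : ModuleCat.{u} R) (f : P →ₗ[R] N),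
      Module.Projective R P ∧ Function.Surjective f ∧
        PdLe d (ModuleCat.of R (LinearMap.ker f))

variable {R}

lemma pdLe_zero_iff {N : ModuleCat.{u} R} : PdLe R 0 N ↔ Module.Projective R N := Iff.rfl

lemma pdLe_succ_iff {d : ℕ} {N : ModuleCat.{u} R} :
    PdLe R (d+1) N ↔ ∃ (P : ModuleCat.{u} R) (f : P →ₗ[R] N),
      Module.Projective R P ∧ Function.Surjective f ∧
        PdLe R d (ModuleCat.of R (LinearMap.ker f)) := Iff.rfl

lemma pdLe_of_linearEquiv (d : ℕ) : ∀ {M N : Type u} [AddCommGroup M] [Module R M]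
    [AddCommGroup N] [Module R N], (M ≃ₗ[R] N) →
    PdLe R d (ModuleCat.of R M) → PdLe R d (ModuleCat.of R N) := by
  induction d with
  | zero =>
    intro M N _ _ _ _ e h
    haveI : Module.Projective R M := h
    exact Module.Projective.of_equiv e
  | succ d ih =>
    rintro M N _ _ _ _ e ⟨P, f, hP, hf, hker⟩
    refine ⟨P, e.toLinearMap.comp f, hP, e.surjective.comp hf, ?_⟩
    have hk : LinearMap.ker (e.toLinearMap.comp f) = LinearMap.ker f := by
      rw [LinearMap.ker_comp, LinearEquiv.ker, Submodule.comap_bot]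
    exact ih (LinearEquiv.ofEq _ _ hk.symm) hker

lemma pdLe_of_subsingleton (d : ℕ) : ∀ {X : Type u} [AddCommGroup X] [Module R X]
    [Subsingleton X], PdLe R d (ModuleCat.of R X) := by
  induction d with
  | zero => intro X _ _ _; exact inferInstanceAs (Module.Projective R X)
  | succ d ih =>
    intro X _ _ _
    haveI : Subsingleton (ModuleCat.of R X) := ‹Subsingleton X›
    refine ⟨ModuleCat.of R X, LinearMap.id, inferInstanceAs (Module.Projective R X),
      Function.surjective_id, ?_⟩
    haveI : Subsingleton
        (LinearMap.ker (LinearMap.id : ModuleCat.of R X →ₗ[R] ModuleCat.of R X)) :=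
      ⟨fun a b => Subtype.ext (Subsingleton.elim _ _)⟩
    exact ih

lemma pdLe_of_projective (d : ℕ) {N : ModuleCat.{u} R} (h : Module.Projective R N) :
    PdLe R d N := by
  induction d with
  | zero => exact h
  | succ d _ =>
    refine ⟨N, LinearMap.id, h, Function.surjective_id, ?_⟩
    haveI : Subsingleton (LinearMap.ker (LinearMap.id : N →ₗ[R] N)) :=
      ⟨fun a b => Subtype.ext (by
        have ha : (a : N) = 0 := a.2
        have hb : (b : N) = 0 := b.2
        rw [ha, hb])⟩
    exact pdLe_of_subsingleton d

lemma pdLe_succ_of_pdLe (d : ℕ) : ∀ {N : ModuleCat.{u} R}, PdLe R d N → PdLe R (d+1) N := by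
  induction d with
  | zero => intro N h; exact pdLe_of_projective 1 h
  | succ d ih =>
    rintro N ⟨P, f, hP, hf, hker⟩
    exact ⟨P, f, hP, hf, ih hker⟩

lemma pdLe_mono {d e : ℕ} (hde : d ≤ e) {N : ModuleCat.{u} R} (h : PdLe R d N) :
    PdLe R e N := by
  induction e with
  | zero => simpa [Nat.le_zero.mp hde] using h
  | succ e ih =>
    rcases Nat.lt_or_ge d (e+1) with h'|h'
    · exact pdLe_succ_of_pdLe e (ih (Nat.lt_succ_iff.mp h'))
    · have : d = e + 1 := le_antisymm hde h'
      subst this; exact h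

/-- The submodule `p.prod q` is isomorphic to `p × q`. -/
def prodSubEquiv {M N : Type u} [AddCommGroup M] [Module R M] [AddCommGroup N] [Module R N]
    (p : Submodule R M) (q : Submodule R N) : (p.prod q : Submodule R (M × N)) ≃ₗ[R] (p × q) where
  toFun x := (⟨x.1.1, x.2.1⟩, ⟨x.1.2, x.2.2⟩)
  invFun y := ⟨(y.1.1, y.2.1), ⟨y.1.2, y.2.2⟩⟩
  map_add' x y := rfl
  map_smul' c x := rfl
  left_inv x := rfl
  right_inv y := rfl

lemma pdLe_prod (d : ℕ) : ∀ {A B : Type u} [AddCommGroup A] [Module R A]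
    [AddCommGroup B] [Module R B],
    PdLe R d (ModuleCat.of R A) → PdLe R d (ModuleCat.of R B) →
    PdLe R d (ModuleCat.of R (A × B)) := by
  induction d with
  | zero =>
    intro A B _ _ _ _ hA hB
    have : Module.Projective R A := hA
    have : Module.Projective R B := hB
    exact (inferInstance : Module.Projective R (A × B))
  | succ d ih =>
    rintro A B _ _ _ _ ⟨P, f, hP, hf, hkf⟩ ⟨Q, g, hQ, hg, hkg⟩
    have : Module.Projective R P := hP
    have : Module.Projective R Q := hQ
    refine ⟨ModuleCat.of R (P × Q), f.prodMap g,
      inferInstanceAs (Module.Projective R (P × Q)), hf.prodMap hg, ?_⟩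
    have hk : LinearMap.ker (f.prodMap g) = (LinearMap.ker f).prod (LinearMap.ker g) :=
      LinearMap.ker_prodMap f g
    exact pdLe_of_linearEquiv d
      ((prodSubEquiv _ _).symm.trans (LinearEquiv.ofEq _ _ hk.symm)) (ih hkf hkg)

lemma pdLe_cover {d : ℕ} {N : ModuleCat.{u} R} (h : PdLe R d N) :
    ∃ (P : ModuleCat.{u} R) (f : P →ₗ[R] N),
      Module.Projective R P ∧ Function.Surjective f ∧
        PdLe R (d-1) (ModuleCat.of R (LinearMap.ker f)) := by
  cases d with
  | zero =>
    refine ⟨N, LinearMap.id, h, Function.surjective_id, ?_⟩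
    have hb : Module.Projective R (⊥ : Submodule R N) := by
      have : Subsingleton (⊥ : Submodule R N) := inferInstance
      infer_instance
    exact pdLe_of_linearEquiv 0
      (LinearEquiv.ofEq _ _ (LinearMap.ker_id (M := N)).symm) hb
  | succ d => exact h

/-- A surjection with a section gives a splitting. -/
noncomputable def splitEquiv {B C : Type u} [AddCommGroup B] [Module R B]
    [AddCommGroup C] [Module R C] (h : B →ₗ[R] C) (s : C →ₗ[R] B)
    (hs : h.comp s = LinearMap.id) :
    B ≃ₗ[R] ((LinearMap.ker h) × C) where
  toFun b := (⟨b - s (h b), by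
      have : h (s (h b)) = h b := congrArg (fun φ => φ (h b)) hs
      simp [LinearMap.mem_ker, map_sub, this]⟩, h b)
  invFun x := x.1.1 + s x.2
  map_add' x y := by
    ext <;> simp [map_add] <;> abel
  map_smul' c x := by
    ext <;> simp [map_smul, smul_sub]
  left_inv b := by simp
  right_inv x := by
    obtain ⟨⟨x1, hx1⟩, c⟩ := x
    have hx1' : h x1 = 0 := hx1
    have hsc : h (s c) = c := congrArg (fun φ => φ c) hs
    ext <;> simp [map_add, hx1', hsc]

end PdTheory

section PdTheory2
variable {R : Type u} [CommRing R]

lemma pdLe_middle : ∀ (c : ℕ) (a : ℕ) {A B C : Type u} [AddCommGroup A] [Module R A]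
    [AddCommGroup B] [Module R B] [AddCommGroup C] [Module R C]
    (g : A →ₗ[R] B) (h : B →ₗ[R] C), Function.Injective g → Function.Surjective h →
    LinearMap.ker h = LinearMap.range g →
    PdLe R a (ModuleCat.of R A) → PdLe R c (ModuleCat.of R C) →
    PdLe R (max a c) (ModuleCat.of R B) := by
  intro c
  induction c using Nat.strong_induction_on with
  | _ c ih =>
  obtain _ | c' := c
  · intro a A B C _ _ _ _ _ _ g h hg hh hex hA hC
    haveI : Module.Projective R C := hC
    obtain ⟨s, hs⟩ := Module.projective_lifting_property h LinearMap.id hh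
    have eA : A ≃ₗ[R] LinearMap.ker h :=
      (LinearEquiv.ofInjective g hg).trans (LinearEquiv.ofEq _ _ hex.symm)
    have hK : PdLe R a (ModuleCat.of R (LinearMap.ker h)) := pdLe_of_linearEquiv a eA hA
    have hC' : PdLe R a (ModuleCat.of R C) := pdLe_of_projective a hC
    have hprod := pdLe_prod a hK hC'
    have := pdLe_of_linearEquiv a (splitEquiv h s hs).symm hprod
    simpa using this
  · intro a A B C _ _ _ _ _ _ g h hg hh hex hA hC
    obtain ⟨P, f, hP, hf, hkf⟩ := hC
    haveI : Module.Projective R P := hP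
    obtain ⟨ft, hft⟩ := Module.projective_lifting_property h f hh
    obtain ⟨Q, q, hQ, hq, hkq⟩ := pdLe_cover hA
    haveI : Module.Projective R Q := hQ
    have hftapp : ∀ p : P, h (ft p) = f p := fun p => congrArg (fun φ => φ p) hft
    have hgker : ∀ y : A, h (g y) = 0 := fun y => by
      have : g y ∈ LinearMap.ker h := by rw [hex]; exact ⟨y, rfl⟩
      exact this
    set Φ : (Q × P : Type u) →ₗ[R] B := (g.comp q).coprod ft with hΦdef
    have hΦapp : ∀ x : (Q × P : Type u), Φ x = g (q x.1) + ft x.2 := fun x => rfl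
    have hΦ : Function.Surjective Φ := by
      intro b
      obtain ⟨p, hp⟩ := hf (h b)
      have hmem : b - ft p ∈ LinearMap.ker h := by
        have : h (b - ft p) = 0 := by rw [map_sub, hftapp, hp, sub_self]
        exact this
      rw [hex] at hmem
      obtain ⟨a0, ha0⟩ := hmem
      obtain ⟨u, hu⟩ := hq a0
      refine ⟨(u, p), ?_⟩
      rw [hΦapp]
      simp only [hu, ha0]
      abel
    have hmemΦ : ∀ x : (Q × P : Type u), x ∈ LinearMap.ker Φ ↔ g (q x.1) + ft x.2 = 0 :=
      fun x => Iff.rfl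
    -- the inclusion of ker q into ker Φ
    set i : (LinearMap.ker q : Type u) →ₗ[R] (LinearMap.ker Φ : Type u) :=
      LinearMap.codRestrict _ ((LinearMap.inl R Q P).comp (LinearMap.ker q).subtype)
        (fun x => by
          have hx : q (x : Q) = 0 := x.2
          show Φ ((x : Q), 0) = 0
          rw [hΦapp]; simp [hx]) with hidef
    have hiapp : ∀ x, ((i x : Q × P)) = ((x : Q), (0 : P)) := fun x => rfl
    set π : (LinearMap.ker Φ : Type u) →ₗ[R] (LinearMap.ker f : Type u) :=
      LinearMap.codRestrict _ ((LinearMap.snd R Q P).comp (LinearMap.ker Φ).subtype)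
        (fun x => by
          have hx : g (q (x : Q × P).1) + ft (x : Q × P).2 = 0 := x.2
          show f (x : Q × P).2 = 0
          have := congrArg h hx
          rw [map_add, hgker, zero_add, map_zero, hftapp] at this
          exact this) with hπdef
    have hπapp : ∀ x, ((π x : P)) = (x : Q × P).2 := fun x => rfl
    have hi : Function.Injective i := by
      intro x y hxy
      apply Subtype.ext
      have := congrArg (fun z : LinearMap.ker Φ => ((z : Q × P)).1) hxy
      simpa [hiapp] using this
    have hπ : Function.Surjective π := by
      rintro ⟨p0, hp0⟩
      have hp0' : f p0 = 0 := hp0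
      have hmem : ft p0 ∈ LinearMap.ker h := by
        have : h (ft p0) = 0 := by rw [hftapp, hp0']
        exact this
      rw [hex] at hmem
      obtain ⟨a0, ha0⟩ := hmem
      obtain ⟨u, hu⟩ := hq a0
      have hker : (((-u : Q), p0) : Q × P) ∈ LinearMap.ker Φ := by
        rw [hmemΦ]
        rw [map_neg, map_neg, hu, ha0]
        abel
      exact ⟨⟨(-u, p0), hker⟩, Subtype.ext rfl⟩
    have hexk : LinearMap.ker π = LinearMap.range i := by
      ext x
      constructor
      · intro hx
        have hx2 : (x : Q × P).2 = 0 := by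
          have := congrArg (fun z : LinearMap.ker f => (z : P)) hx
          simpa [hπapp] using this
        have hxΦ : g (q (x : Q × P).1) + ft (x : Q × P).2 = 0 := x.2
        rw [hx2, map_zero, add_zero] at hxΦ
        have hq0 : q (x : Q × P).1 = 0 := by
          apply hg
          rw [hxΦ, map_zero]
        refine ⟨⟨(x : Q × P).1, hq0⟩, ?_⟩
        apply Subtype.ext
        rw [hiapp]
        exact Prod.ext rfl hx2.symm
      · rintro ⟨y, rfl⟩
        exact Subtype.ext (by simp [hπapp, hiapp])
    have hKer : PdLe R (max (a-1) c') (ModuleCat.of R (LinearMap.ker Φ)) :=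
      ih c' (Nat.lt_succ_self c') (a-1) i π hi hπ hexk hkq hkf
    have hmax : max a (c'+1) = (max (a-1) c') + 1 := by omega
    rw [hmax]
    exact ⟨ModuleCat.of R (Q × P : Type u), Φ,
      inferInstanceAs (Module.Projective R (Q × P : Type u)), hΦ, hKer⟩

lemma pdLe_quot (b a : ℕ) {A B C : Type u} [AddCommGroup A] [Module R A]
    [AddCommGroup B] [Module R B] [AddCommGroup C] [Module R C]
    (g : A →ₗ[R] B) (h : B →ₗ[R] C) (hg : Function.Injective g)
    (hh : Function.Surjective h) (hex : LinearMap.ker h = LinearMap.range g)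
    (hA : PdLe R a (ModuleCat.of R A)) (hB : PdLe R b (ModuleCat.of R B)) :
    PdLe R (max (a+1) b) (ModuleCat.of R C) := by
  obtain _ | b' := b
  · haveI : Module.Projective R B := hB
    have eA : A ≃ₗ[R] LinearMap.ker h :=
      (LinearEquiv.ofInjective g hg).trans (LinearEquiv.ofEq _ _ hex.symm)
    have hK : PdLe R a (ModuleCat.of R (LinearMap.ker h)) := pdLe_of_linearEquiv a eA hA
    simp only [Nat.max_zero]
    exact ⟨ModuleCat.of R B, h, hB, hh, hK⟩
  · obtain ⟨P, f, hP, hf, hkf⟩ := hB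
    have hgker : ∀ y : A, h (g y) = 0 := fun y => by
      have : g y ∈ LinearMap.ker h := by rw [hex]; exact ⟨y, rfl⟩
      exact this
    have hcs : Function.Surjective (h.comp f) := by
      intro c
      obtain ⟨b0, hb0⟩ := hh c
      obtain ⟨p, hp⟩ := hf b0
      exact ⟨p, by rw [LinearMap.comp_apply]; exact (congrArg h hp).trans hb0⟩
    have hle : LinearMap.ker f ≤ LinearMap.ker (h.comp f) := by
      intro x hx
      have hx' : f x = 0 := hx
      show h (f x) = 0
      rw [hx', map_zero]
    set j : (LinearMap.ker f : Type u) →ₗ[R] (LinearMap.ker (h.comp f) : Type u) :=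
      Submodule.inclusion hle with hjdef
    have hj : Function.Injective j := Submodule.inclusion_injective hle
    set φ : (LinearMap.ker (h.comp f) : Type u) →ₗ[R] (LinearMap.range g : Type u) :=
      LinearMap.codRestrict _ (f.comp (LinearMap.ker (h.comp f)).subtype)
        (fun x => by
          have hx : h (f (x : P)) = 0 := x.2
          show f (x : P) ∈ LinearMap.range g
          rw [← hex]
          exact hx) with hφdef
    have hφapp : ∀ x, ((φ x : B)) = f (x : P) := fun x => rfl
    set e : A ≃ₗ[R] LinearMap.range g := LinearEquiv.ofInjective g hg with hedef
    set ψ : (LinearMap.ker (h.comp f) : Type u) →ₗ[R] A :=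
      e.symm.toLinearMap.comp φ with hψdef
    have hψapp : ∀ x, ψ x = e.symm (φ x) := fun x => rfl
    have hψ : Function.Surjective ψ := by
      intro a0
      obtain ⟨p, hp⟩ := hf (g a0)
      have hpK : p ∈ LinearMap.ker (h.comp f) := by
        show h (f p) = 0
        rw [hp, hgker]
      refine ⟨⟨p, hpK⟩, ?_⟩
      have hφp : φ ⟨p, hpK⟩ = e a0 := by
        apply Subtype.ext
        rw [hφapp]
        simp [hedef, hp, LinearEquiv.ofInjective_apply]
      rw [hψapp, hφp, LinearEquiv.symm_apply_apply]
    have hexψ : LinearMap.ker ψ = LinearMap.range j := by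
      ext x
      constructor
      · intro hx
        have hφ0 : φ x = 0 := by
          have : e.symm (φ x) = 0 := hx
          rwa [LinearEquiv.map_eq_zero_iff] at this
        have hfx : f (x : P) = 0 := by
          have := congrArg (fun z : LinearMap.range g => (z : B)) hφ0
          simpa [hφapp] using this
        exact ⟨⟨(x : P), hfx⟩, Subtype.ext rfl⟩
      · rintro ⟨y, rfl⟩
        have hy : f (y : P) = 0 := y.2
        show ψ (j y) = 0
        rw [hψapp]
        have : φ (j y) = 0 := by
          apply Subtype.ext
          rw [hφapp]
          exact hy
        rw [this, map_zero]
    have hK : PdLe R (max b' a) (ModuleCat.of R (LinearMap.ker (h.comp f))) :=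
      pdLe_middle a b' j ψ hj hψ hexψ hkf hA
    have hmax : max (a+1) (b'+1) = (max b' a) + 1 := by omega
    rw [hmax]
    exact ⟨P, h.comp f, hP, hcs, hK⟩

end PdTheory2

section Convert
variable {R : Type u} [CommRing R]

lemma subsingleton_of_isZero {M : ModuleCat.{u} R} (h : Limits.IsZero M) :
    Subsingleton M := by
  constructor
  intro a b
  have h1 : (𝟙 M : M ⟶ M) = 0 := h.eq_of_src _ _
  have ha : a = (0 : M ⟶ M) a := congrArg (fun φ : M ⟶ M => φ a) h1
  have hb : b = (0 : M ⟶ M) b := congrArg (fun φ : M ⟶ M => φ b) h1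
  rw [ha, hb]; rfl

lemma isZero_of_subsingleton' {M : ModuleCat.{u} R} [Subsingleton M] :
    Limits.IsZero M := ModuleCat.isZero_of_subsingleton M

lemma submodule_eq_of_subsingleton {M : Type u} [AddCommGroup M] [Module R M]
    [Subsingleton M] (p q : Submodule R M) : p = q := by
  ext x
  rw [Subsingleton.elim x 0]
  simp

lemma exists_chain (d : ℕ) : ∀ (N : ModuleCat.{u} R), PdLe R d N →
    ∃ (C : ChainComplex (ModuleCat.{u} R) ℕ) (π₀ : C.X 0 ⟶ N),
      (∀ i, Module.Projective R (C.X i)) ∧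
      Function.Surjective π₀ ∧
      LinearMap.range (C.d 1 0).hom = LinearMap.ker π₀.hom ∧
      (∀ i : ℕ, LinearMap.range (C.d (i+2) (i+1)).hom = LinearMap.ker (C.d (i+1) i).hom) ∧
      (∀ i, d < i → Limits.IsZero (C.X i)) := by
  induction d with
  | zero =>
    intro N hN
    refine ⟨(ChainComplex.single₀ (ModuleCat.{u} R)).obj N,
      (HomologicalComplex.singleObjXSelf (ComplexShape.down ℕ) 0 N).hom, ?_, ?_, ?_, ?_, ?_⟩
    · intro i
      cases i with
      | zero => exact hN
      | succ i =>
        have hz := HomologicalComplex.isZero_single_obj_X (ComplexShape.down ℕ) 0 N (i+1)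
          (by simp)
        haveI := subsingleton_of_isZero hz
        infer_instance
    · intro x; exact ⟨x, rfl⟩
    · have h1 : LinearMap.range
          (((ChainComplex.single₀ (ModuleCat.{u} R)).obj N).d 1 0).hom = ⊥ := by
        rw [HomologicalComplex.single_obj_d, ModuleCat.hom_zero]
        exact LinearMap.range_zero
      have h2 : LinearMap.ker
          ((HomologicalComplex.singleObjXSelf (ComplexShape.down ℕ) 0 N).hom.hom) = ⊥ :=
        LinearMap.ker_eq_bot.mpr (fun x y hxy => hxy)
      rw [h1, h2]
    · intro i
      have hz := HomologicalComplex.isZero_single_obj_X (ComplexShape.down ℕ) 0 N (i+1)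
        (by simp)
      haveI := subsingleton_of_isZero hz
      exact submodule_eq_of_subsingleton _ _
    · intro i hi
      exact HomologicalComplex.isZero_single_obj_X (ComplexShape.down ℕ) 0 N i
        (by omega)
  | succ d ih =>
    rintro N ⟨P, f, hP, hf, hker⟩
    obtain ⟨C, π₀, hproj, hsurj, hex0, hexs, hzero⟩ := ih _ hker
    set dd : C.X 0 ⟶ P := ModuleCat.ofHom (((LinearMap.ker f).subtype).comp π₀.hom) with hdddef
    have w : C.d 1 0 ≫ dd = 0 := by
      apply ModuleCat.hom_ext; apply LinearMap.ext
      intro x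
      have hmem : (C.d 1 0) x ∈ LinearMap.ker π₀.hom := by
        rw [← hex0]; exact ⟨x, rfl⟩
      show (LinearMap.ker f).subtype (π₀ (C.d 1 0 x)) = 0
      rw [hmem, map_zero]
    refine ⟨C.augment dd w, ModuleCat.ofHom f, ?_, hf, ?_, ?_, ?_⟩
    · intro i
      cases i with
      | zero => exact hP
      | succ i => exact hproj i
    · show LinearMap.range dd.hom = LinearMap.ker f
      rw [hdddef, ModuleCat.hom_ofHom, LinearMap.range_comp, LinearMap.range_eq_top.mpr hsurj,
        Submodule.map_top, Submodule.range_subtype]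
    · intro i
      cases i with
      | zero =>
        show LinearMap.range (C.d 1 0).hom = LinearMap.ker dd.hom
        rw [hex0]
        apply le_antisymm
        · intro x hx
          show (LinearMap.ker f).subtype (π₀ x) = 0
          rw [LinearMap.mem_ker.mp hx, map_zero]
        · intro x hx
          have : (LinearMap.ker f).subtype (π₀ x) = 0 := hx
          have h0 : π₀ x = 0 := Subtype.ext this
          exact h0
      | succ i =>
        show LinearMap.range (C.d (i+2) (i+1)).hom = LinearMap.ker (C.d (i+1) i).hom
        exact hexs i
    · intro i hi
      obtain ⟨j, rfl⟩ : ∃ j, i = j + 1 := ⟨i - 1, by omega⟩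
      exact hzero j (by omega)

end Convert

section Assemble
variable {R : Type u} [CommRing R]

lemma exists_projectiveResolution_of_pdLe {d : ℕ} {N : ModuleCat.{u} R} (h : PdLe R d N) :
    ∃ P : ProjectiveResolution N, ∀ i, d < i → Limits.IsZero (P.complex.X i) := by
  obtain ⟨C, π₀, hproj, hsurj, hex0, hexs, hzero⟩ := exists_chain d N h
  haveI hCproj : ∀ i, Projective (C.X i) := fun i =>
    (IsProjective.iff_projective (C.X i)).mp (hproj i)
  have w : C.d 1 0 ≫ π₀ = 0 := by
    apply ModuleCat.hom_ext; apply LinearMap.ext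
    intro x
    have hmem : (C.d 1 0) x ∈ LinearMap.ker π₀.hom := by
      rw [← hex0]; exact ⟨x, rfl⟩
    exact hmem
  set π : C ⟶ (ChainComplex.single₀ (ModuleCat.{u} R)).obj N :=
    (ChainComplex.toSingle₀Equiv C N).symm ⟨π₀, w⟩ with hπdef
  have hπf0 : π.f 0 = π₀ := ChainComplex.toSingle₀Equiv_symm_apply_f_zero _ _
  have hquasi : QuasiIso π := by
    constructor
    intro i
    cases i with
    | zero =>
      rw [ChainComplex.quasiIsoAt₀_iff, ShortComplex.quasiIso_iff_of_zeros']
      · constructor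
        · rw [ShortComplex.moduleCat_exact_iff]
          intro x hx
          have hx' : π₀ x = 0 := by rw [← hπf0]; exact hx
          have : x ∈ LinearMap.range (C.d 1 0).hom := by
            rw [hex0]; exact hx'
          exact this
        · have hsurj' : Function.Surjective (π.f 0) := by rw [hπf0]; exact hsurj
          exact (ModuleCat.epi_iff_surjective (π.f 0)).mpr hsurj'
      · exact C.shape 0 0 (by simp)
      · exact HomologicalComplex.single_obj_d (ComplexShape.down ℕ) 0 N 1 0
      · exact HomologicalComplex.single_obj_d (ComplexShape.down ℕ) 0 N 0 0
    | succ i =>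
      rw [quasiIsoAt_iff_exactAt' π (i+1) (ChainComplex.exactAt_succ_single_obj _ _)]
      rw [HomologicalComplex.exactAt_iff' C (i+2) (i+1) i (by simp) (by simp)]
      rw [ShortComplex.moduleCat_exact_iff_range_eq_ker]
      exact hexs i
  exact ⟨{ complex := C, π := π, quasiIso := hquasi }, fun i hi => hzero i hi⟩

end Assemble

section Monomial
open MvPolynomial

variable {k : Type u} [Field k] {n : ℕ}

/-- The monomial ideal generated by a finite set of exponent vectors. -/
noncomputable def JJ (k : Type u) [Field k] {n : ℕ} (G : Finset (Fin n →₀ ℕ)) :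
    Ideal (MvPolynomial (Fin n) k) :=
  Ideal.span ((fun a => monomial a (1 : k)) '' (G : Set (Fin n →₀ ℕ)))

lemma mem_JJ {G : Finset (Fin n →₀ ℕ)} {x : MvPolynomial (Fin n) k} :
    x ∈ JJ k G ↔ ∀ m ∈ x.support, ∃ a ∈ G, a ≤ m :=
  mem_ideal_span_monomial_image

lemma JJ_union (G₁ G₂ : Finset (Fin n →₀ ℕ)) :
    JJ k (G₁ ∪ G₂) = JJ k G₁ ⊔ JJ k G₂ := by
  rw [JJ, JJ, JJ, Finset.coe_union, Set.image_union]
  exact Submodule.span_union _ _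

lemma JJ_inf (G₁ G₂ : Finset (Fin n →₀ ℕ)) :
    JJ k G₁ ⊓ JJ k G₂ = JJ k ((G₁ ×ˢ G₂).image fun p => p.1 ⊔ p.2) := by
  ext x
  rw [Submodule.mem_inf, mem_JJ, mem_JJ, mem_JJ, ← forall_and]
  apply forall_congr'
  intro m
  constructor
  · rintro ⟨h1, h2⟩ hm
    obtain ⟨a, ha, hale⟩ := h1 hm
    obtain ⟨b, hb, hble⟩ := h2 hm
    exact ⟨a ⊔ b, Finset.mem_image.mpr ⟨(a, b), Finset.mem_product.mpr ⟨ha, hb⟩, rfl⟩,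
      sup_le hale hble⟩
  · intro h
    constructor <;> intro hm <;> obtain ⟨c, hc, hcle⟩ := h hm <;>
      obtain ⟨⟨a, b⟩, hab, rfl⟩ := Finset.mem_image.mp hc <;>
      obtain ⟨ha, hb⟩ := Finset.mem_product.mp hab
    · exact ⟨a, ha, le_trans le_sup_left hcle⟩
    · exact ⟨b, hb, le_trans le_sup_right hcle⟩

/-- Multiplication by the monomial `x^v`, as a linear self-map. -/
noncomputable def muv (k : Type u) [Field k] {n : ℕ} (v : Fin n →₀ ℕ) :
    MvPolynomial (Fin n) k →ₗ[MvPolynomial (Fin n) k] MvPolynomial (Fin n) k :=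
  LinearMap.lsmul _ _ (monomial v (1 : k))

lemma muv_apply (v : Fin n →₀ ℕ) (x : MvPolynomial (Fin n) k) :
    muv k v x = monomial v (1 : k) * x := rfl

lemma muv_inj (v : Fin n →₀ ℕ) : Function.Injective (muv k v) := by
  intro x y hxy
  have h1 : (monomial v (1 : k) : MvPolynomial (Fin n) k) ≠ 0 := by
    rw [Ne, monomial_eq_zero]
    exact one_ne_zero
  exact mul_right_injective₀ h1 (by simpa [muv_apply] using hxy)

lemma JJ_shift (v : Fin n →₀ ℕ) (G : Finset (Fin n →₀ ℕ)) :
    JJ k (G.image (fun a => v + a)) = Submodule.map (muv k v) (JJ k G) := by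
  rw [JJ, JJ, Ideal.span, Ideal.span, Submodule.map_span, Finset.coe_image,
    ← Set.image_comp, ← Set.image_comp]
  congr 1
  apply Set.image_congr
  intro a _
  show monomial (v + a) (1 : k) = muv k v (monomial a 1)
  rw [muv_apply, monomial_mul, one_mul]

lemma pdLe_JJ_of_card_le_one {G : Finset (Fin n →₀ ℕ)} (h : G.card ≤ 1) :
    PdLe (MvPolynomial (Fin n) k) 0 (ModuleCat.of _ (JJ k G)) := by
  rcases G.eq_empty_or_nonempty with rfl | ⟨a, ha⟩
  · have hbot : JJ k (∅ : Finset (Fin n →₀ ℕ)) = ⊥ := by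
      rw [JJ, Finset.coe_empty, Set.image_empty, Ideal.span, Submodule.span_empty]
    haveI : Subsingleton (JJ k (∅ : Finset (Fin n →₀ ℕ))) := by
      constructor
      rintro ⟨x, hx⟩ ⟨y, hy⟩
      apply Subtype.ext
      rw [hbot] at hx hy
      rw [Submodule.mem_bot] at hx hy
      show x = y
      rw [hx, hy]
    exact inferInstanceAs (Module.Projective (MvPolynomial (Fin n) k)
      (JJ k (∅ : Finset (Fin n →₀ ℕ))))
  · have hGa : G = {a} := Finset.eq_singleton_iff_unique_mem.mpr
      ⟨ha, fun b hb => Finset.card_le_one.mp h b hb a ha⟩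
    subst hGa
    have himg : JJ k ({a} : Finset (Fin n →₀ ℕ)) =
        Submodule.map (muv k a) (JJ k ({0} : Finset (Fin n →₀ ℕ))) := by
      rw [← JJ_shift]
      congr 1
      simp
    have htop : JJ k ({0} : Finset (Fin n →₀ ℕ)) = ⊤ := by
      rw [JJ]
      simp only [Finset.coe_singleton, Set.image_singleton]
      rw [monomial_zero', C_1, Ideal.span_singleton_one]
    have e : (MvPolynomial (Fin n) k) ≃ₗ[MvPolynomial (Fin n) k]
        (JJ k ({a} : Finset (Fin n →₀ ℕ))) :=
      ((LinearEquiv.ofEq _ _ htop).trans Submodule.topEquiv).symm.trans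
        ((Submodule.equivMapOfInjective (muv k a) (muv_inj a) _).trans
          (LinearEquiv.ofEq _ _ himg.symm))
    exact pdLe_of_linearEquiv 0 e (pdLe_of_projective 0
      (inferInstanceAs (Module.Projective (MvPolynomial (Fin n) k) (MvPolynomial (Fin n) k))))

/-- Horseshoe-type bound for a sum of two ideals. -/
lemma pdLe_sup {A B : Ideal (MvPolynomial (Fin n) k)} {a b₁ b₂ : ℕ}
    (hI : PdLe (MvPolynomial (Fin n) k) a (ModuleCat.of _ (A ⊓ B : Ideal _)))
    (hA : PdLe (MvPolynomial (Fin n) k) b₁ (ModuleCat.of _ A))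
    (hB : PdLe (MvPolynomial (Fin n) k) b₂ (ModuleCat.of _ B)) :
    PdLe (MvPolynomial (Fin n) k) (max (a+1) (max b₁ b₂))
      (ModuleCat.of _ (A ⊔ B : Ideal _)) := by
  set S := MvPolynomial (Fin n) k
  set g : ((A ⊓ B : Ideal S) : Type u) →ₗ[S] (↥A × ↥B) :=
    (Submodule.inclusion inf_le_left).prod (-(Submodule.inclusion inf_le_right)) with hgdef
  set h : (↥A × ↥B) →ₗ[S] ((A ⊔ B : Ideal S) : Type u) :=
    (Submodule.inclusion le_sup_left).coprod (Submodule.inclusion le_sup_right) with hhdef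
  have hg : Function.Injective g := by
    intro z w hzw
    apply Subtype.ext
    have := congrArg (fun t : ↥A × ↥B => ((t.1 : S))) hzw
    exact this
  have hh : Function.Surjective h := by
    rintro ⟨z, hz⟩
    rw [Submodule.mem_sup] at hz
    obtain ⟨x, hx, y, hy, rfl⟩ := hz
    exact ⟨(⟨x, hx⟩, ⟨y, hy⟩), Subtype.ext rfl⟩
  have hex : LinearMap.ker h = LinearMap.range g := by
    ext z
    constructor
    · intro hz
      have hz' : (z.1 : S) + (z.2 : S) = 0 := by
        have := congrArg (fun t : ((A ⊔ B : Ideal S) : Type u) => (t : S)) hz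
        exact this
      have hzB : (z.1 : S) ∈ B := by
        have h1 : (z.1 : S) = -(z.2 : S) := by linear_combination hz'
        rw [h1]
        exact neg_mem z.2.2
      refine ⟨⟨(z.1 : S), Submodule.mem_inf.mpr ⟨z.1.2, hzB⟩⟩, ?_⟩
      have h2 : -(z.1 : S) = (z.2 : S) := by linear_combination -hz'
      exact Prod.ext (Subtype.ext rfl) (Subtype.ext h2)
    · rintro ⟨w, rfl⟩
      apply Subtype.ext
      show ((g w).1 : S) + ((g w).2 : S) = 0
      have h1 : ((g w).1 : S) = (w : S) := rfl
      have h2 : ((g w).2 : S) = -(w : S) := rfl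
      rw [h1, h2, add_neg_cancel]
  have hprod := pdLe_prod (max b₁ b₂) (pdLe_mono (le_max_left _ _) hA)
    (pdLe_mono (le_max_right _ _) hB)
  exact pdLe_quot (max b₁ b₂) a g h hg hh hex hI hprod

end Monomial

section MonomialInduction
open MvPolynomial

variable {k : Type u} [Field k] {n : ℕ}

lemma sqf_eq_of_support_eq {a b : Fin n →₀ ℕ} (ha1 : ∀ j, a j ≤ 1) (hb1 : ∀ j, b j ≤ 1)
    (h : a.support = b.support) : a = b := by
  ext j
  by_cases hj : j ∈ a.support
  · have hja : a j ≠ 0 := Finsupp.mem_support_iff.mp hj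
    have hjb : b j ≠ 0 := Finsupp.mem_support_iff.mp (h ▸ hj)
    have := ha1 j
    have := hb1 j
    omega
  · have hja : a j = 0 := Finsupp.notMem_support_iff.mp hj
    have hjb : b j = 0 := Finsupp.notMem_support_iff.mp (by rwa [h] at hj)
    rw [hja, hjb]

lemma JJ_factor_pd {x : Fin n} {H : Finset (Fin n →₀ ℕ)} (hx1 : ∀ a ∈ H, a x = 1) {d : ℕ}
    (h : PdLe (MvPolynomial (Fin n) k) d
      (ModuleCat.of _ (JJ k (H.image (Finsupp.erase x))))) :
    PdLe (MvPolynomial (Fin n) k) d (ModuleCat.of _ (JJ k H)) := by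
  have heq : Set.EqOn ((fun b => Finsupp.single x 1 + b) ∘ (Finsupp.erase x)) id
      (H : Set (Fin n →₀ ℕ)) := by
    intro a ha
    show Finsupp.single x 1 + Finsupp.erase x a = a
    conv_rhs => rw [← Finsupp.single_add_erase x a]
    rw [hx1 a ha]
  have hHimg : H = (H.image (Finsupp.erase x)).image (fun b => Finsupp.single x 1 + b) := by
    rw [Finset.image_image, Finset.image_congr heq, Finset.image_id]
  have himg : JJ k H =
      Submodule.map (muv k (Finsupp.single x 1)) (JJ k (H.image (Finsupp.erase x))) := by
    conv_lhs => rw [hHimg]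
    exact JJ_shift _ _
  exact pdLe_of_linearEquiv d
    ((Submodule.equivMapOfInjective (muv k (Finsupp.single x 1)) (muv_inj _) _).trans
      (LinearEquiv.ofEq _ _ himg.symm)) h

lemma erase_sqf {a : Fin n →₀ ℕ} (ha : ∀ j, a j ≤ 1) (x : Fin n) (j : Fin n) :
    (Finsupp.erase x a) j ≤ 1 := by
  by_cases hj : j = x
  · subst hj; rw [Finsupp.erase_same]; omega
  · rw [Finsupp.erase_ne hj]; exact ha j

lemma pd_C (s : ℕ) : ∀ (V : Finset (Fin n)) (G : Finset (Fin n →₀ ℕ)),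
    V.card ≤ s →
    (∀ a ∈ G, ∀ j, a j ≤ 1) → (∀ a ∈ G, a.support ⊆ V) →
    PdLe (MvPolynomial (Fin n) k) (V.card - 1) (ModuleCat.of _ (JJ k G)) := by
  induction s with
  | zero =>
    intro V G hcard hsq hsupp
    have hall : ∀ a ∈ G, a = 0 := fun a ha => by
      have hV : V = ∅ := Finset.card_eq_zero.mp (le_antisymm hcard (Nat.zero_le _))
      have h0 : a.support ⊆ ∅ := hV ▸ hsupp a ha
      rw [Finset.subset_empty] at h0
      exact Finsupp.support_eq_empty.mp h0
    exact pdLe_mono (Nat.zero_le _) (pdLe_JJ_of_card_le_one (Finset.card_le_one.mpr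
      (fun a ha b hb => (hall a ha).trans (hall b hb).symm)))
  | succ s ih =>
    intro V G hcard hsq hsupp
    by_cases hVs : V.card ≤ s
    · exact ih V G hVs hsq hsupp
    by_cases hV1 : V.card ≤ 1
    · -- base case with at most one variable
      by_cases h0 : (0 : Fin n →₀ ℕ) ∈ G
      · have hmem : (monomial (0 : Fin n →₀ ℕ) (1:k)) ∈ JJ k G :=
          Ideal.subset_span ⟨0, by exact_mod_cast h0, rfl⟩
        rw [monomial_zero', C_1] at hmem
        have htop : JJ k G = ⊤ := Ideal.eq_top_iff_one _ |>.mpr hmem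
        have e : (MvPolynomial (Fin n) k) ≃ₗ[MvPolynomial (Fin n) k] (JJ k G) :=
          ((LinearEquiv.ofEq _ _ htop).trans Submodule.topEquiv).symm
        exact pdLe_mono (Nat.zero_le _) (pdLe_of_linearEquiv 0 e (pdLe_of_projective 0
          (inferInstanceAs (Module.Projective (MvPolynomial (Fin n) k)
            (MvPolynomial (Fin n) k)))))
      · have hsuppeq : ∀ a ∈ G, a.support = V := by
          intro a ha
          have hne : a ≠ 0 := fun h => h0 (h ▸ ha)
          have hnonempty : a.support.Nonempty := Finsupp.support_nonempty_iff.mpr hne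
          have h1 : 1 ≤ a.support.card := Finset.card_pos.mpr hnonempty
          exact Finset.eq_of_subset_of_card_le (hsupp a ha) (by omega)
        exact pdLe_mono (Nat.zero_le _) (pdLe_JJ_of_card_le_one (Finset.card_le_one.mpr
          (fun a ha b hb => sqf_eq_of_support_eq (hsq a ha) (hsq b hb)
            ((hsuppeq a ha).trans (hsuppeq b hb).symm))))
    -- main case: V.card ≥ 2
    push_neg at hV1
    obtain ⟨x, hxV⟩ := Finset.card_pos.mp (show 0 < V.card by omega)
    set V' := V.erase x with hV'def
    have hV'card : V'.card = V.card - 1 := Finset.card_erase_of_mem hxV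
    set G₁ := G.filter (fun a => a x ≠ 0) with hG₁def
    set G₀ := G.filter (fun a => a x = 0) with hG₀def
    have hG₁sub : ∀ a ∈ G₁, a ∈ G := fun a ha => (Finset.mem_filter.mp ha).1
    have hG₀sub : ∀ a ∈ G₀, a ∈ G := fun a ha => (Finset.mem_filter.mp ha).1
    have hG₁x : ∀ a ∈ G₁, a x = 1 := fun a ha => by
      have h1 := (Finset.mem_filter.mp ha).2
      have h2 := hsq a (hG₁sub a ha) x
      omega
    have hG₀x : ∀ a ∈ G₀, a x = 0 := fun a ha => (Finset.mem_filter.mp ha).2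
    have hGsplit : G = G₁ ∪ G₀ := by
      ext a
      simp only [hG₁def, hG₀def, Finset.mem_union, Finset.mem_filter]
      tauto
    set K := G₁.image (Finsupp.erase x) with hKdef
    -- generators of K
    have hKsq : ∀ b ∈ K, ∀ j, b j ≤ 1 := by
      intro b hb j
      obtain ⟨a, ha, rfl⟩ := Finset.mem_image.mp hb
      exact erase_sqf (hsq a (hG₁sub a ha)) x j
    have hKsupp : ∀ b ∈ K, b.support ⊆ V' := by
      intro b hb
      obtain ⟨a, ha, rfl⟩ := Finset.mem_image.mp hb
      rw [Finsupp.support_erase]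
      exact Finset.erase_subset_erase x (hsupp a (hG₁sub a ha))
    have hKpd := ih V' K (by omega) hKsq hKsupp
    have hApd : PdLe (MvPolynomial (Fin n) k) (V'.card - 1)
        (ModuleCat.of _ (JJ k G₁)) := JJ_factor_pd hG₁x hKpd
    have hBpd := ih V' G₀ (by omega) (fun a ha => hsq a (hG₀sub a ha))
      (fun a ha => Finset.subset_erase.mpr ⟨hsupp a (hG₀sub a ha),
        Finsupp.notMem_support_iff.mpr (hG₀x a ha)⟩)
    set L := (G₁ ×ˢ G₀).image (fun p => p.1 ⊔ p.2) with hLdef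
    have hLmem : ∀ c ∈ L, ∃ a ∈ G₁, ∃ b ∈ G₀, c = a ⊔ b := by
      intro c hc
      obtain ⟨⟨a, b⟩, hab, rfl⟩ := Finset.mem_image.mp hc
      obtain ⟨ha, hb⟩ := Finset.mem_product.mp hab
      exact ⟨a, ha, b, hb, rfl⟩
    have hLx : ∀ c ∈ L, c x = 1 := by
      intro c hc
      obtain ⟨a, ha, b, hb, rfl⟩ := hLmem c hc
      rw [Finsupp.sup_apply, hG₁x a ha, hG₀x b hb]
      simp
    have hLsq : ∀ c ∈ L, ∀ j, c j ≤ 1 := by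
      intro c hc j
      obtain ⟨a, ha, b, hb, rfl⟩ := hLmem c hc
      rw [Finsupp.sup_apply]
      have := hsq a (hG₁sub a ha) j
      have := hsq b (hG₀sub b hb) j
      omega
    have hLsupp : ∀ c ∈ L, c.support ⊆ V := by
      intro c hc
      obtain ⟨a, ha, b, hb, rfl⟩ := hLmem c hc
      rw [Finsupp.support_sup]
      exact Finset.union_subset (hsupp a (hG₁sub a ha)) (hsupp b (hG₀sub b hb))
    set L' := L.image (Finsupp.erase x) with hL'def
    have hL'pd := ih V' L' (by omega)
      (fun b hb j => by
        obtain ⟨c, hc, rfl⟩ := Finset.mem_image.mp hb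
        exact erase_sqf (hLsq c hc) x j)
      (fun b hb => by
        obtain ⟨c, hc, rfl⟩ := Finset.mem_image.mp hb
        rw [Finsupp.support_erase]
        exact Finset.erase_subset_erase x (hLsupp c hc))
    have hIpd : PdLe (MvPolynomial (Fin n) k) (V'.card - 1)
        (ModuleCat.of _ (JJ k G₁ ⊓ JJ k G₀ : Ideal _)) := by
      rw [JJ_inf]
      exact JJ_factor_pd hLx hL'pd
    have hsum := pdLe_sup hIpd hApd hBpd
    have hJJG : JJ k G = JJ k G₁ ⊔ JJ k G₀ := by
      conv_lhs => rw [hGsplit]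
      exact JJ_union _ _
    rw [hJJG]
    exact pdLe_mono (by omega) hsum

lemma pd_D (s : ℕ) : ∀ (V : Finset (Fin n)) (G : Finset (Fin n →₀ ℕ)),
    V.card ≤ s →
    (∀ a ∈ G, ∀ j, a j ≤ 1) → (∀ a ∈ G, a.support ⊆ V) →
    (∀ a ∈ G, 2 ≤ a.support.card) →
    PdLe (MvPolynomial (Fin n) k) (V.card - 2) (ModuleCat.of _ (JJ k G)) := by
  induction s with
  | zero =>
    intro V G hcard hsq hsupp hdeg
    have hempty : G = ∅ := Finset.eq_empty_of_forall_notMem (fun a ha => by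
      have h1 := hdeg a ha
      have h2 := Finset.card_le_card (hsupp a ha)
      omega)
    subst hempty
    exact pdLe_mono (Nat.zero_le _) (pdLe_JJ_of_card_le_one (by simp))
  | succ s ih =>
    intro V G hcard hsq hsupp hdeg
    by_cases hVs : V.card ≤ s
    · exact ih V G hVs hsq hsupp hdeg
    by_cases hV2 : V.card ≤ 2
    · -- all generators are equal
      have hsuppeq : ∀ a ∈ G, a.support = V := fun a ha =>
        Finset.eq_of_subset_of_card_le (hsupp a ha) (by
          have := hdeg a ha
          have := Finset.card_le_card (hsupp a ha)
          omega)
      exact pdLe_mono (Nat.zero_le _) (pdLe_JJ_of_card_le_one (Finset.card_le_one.mpr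
        (fun a ha b hb => sqf_eq_of_support_eq (hsq a ha) (hsq b hb)
          ((hsuppeq a ha).trans (hsuppeq b hb).symm))))
    -- main case: V.card ≥ 3
    push_neg at hV2
    obtain ⟨x, hxV⟩ := Finset.card_pos.mp (show 0 < V.card by omega)
    set V' := V.erase x with hV'def
    have hV'card : V'.card = V.card - 1 := Finset.card_erase_of_mem hxV
    set G₁ := G.filter (fun a => a x ≠ 0) with hG₁def
    set G₀ := G.filter (fun a => a x = 0) with hG₀def
    have hG₁sub : ∀ a ∈ G₁, a ∈ G := fun a ha => (Finset.mem_filter.mp ha).1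
    have hG₀sub : ∀ a ∈ G₀, a ∈ G := fun a ha => (Finset.mem_filter.mp ha).1
    have hG₁x : ∀ a ∈ G₁, a x = 1 := fun a ha => by
      have h1 := (Finset.mem_filter.mp ha).2
      have h2 := hsq a (hG₁sub a ha) x
      omega
    have hG₀x : ∀ a ∈ G₀, a x = 0 := fun a ha => (Finset.mem_filter.mp ha).2
    have hGsplit : G = G₁ ∪ G₀ := by
      ext a
      simp only [hG₁def, hG₀def, Finset.mem_union, Finset.mem_filter]
      tauto
    set K := G₁.image (Finsupp.erase x) with hKdef
    have hKsq : ∀ b ∈ K, ∀ j, b j ≤ 1 := by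
      intro b hb j
      obtain ⟨a, ha, rfl⟩ := Finset.mem_image.mp hb
      exact erase_sqf (hsq a (hG₁sub a ha)) x j
    have hKsupp : ∀ b ∈ K, b.support ⊆ V' := by
      intro b hb
      obtain ⟨a, ha, rfl⟩ := Finset.mem_image.mp hb
      rw [Finsupp.support_erase]
      exact Finset.erase_subset_erase x (hsupp a (hG₁sub a ha))
    have hKpd := pd_C (k := k) s V' K (by omega) hKsq hKsupp
    have hApd : PdLe (MvPolynomial (Fin n) k) (V'.card - 1)
        (ModuleCat.of _ (JJ k G₁)) := JJ_factor_pd hG₁x hKpd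
    have hG₀supp : ∀ a ∈ G₀, a.support ⊆ V' := fun a ha =>
      Finset.subset_erase.mpr ⟨hsupp a (hG₀sub a ha),
        Finsupp.notMem_support_iff.mpr (hG₀x a ha)⟩
    have hBpd := ih V' G₀ (by omega) (fun a ha => hsq a (hG₀sub a ha)) hG₀supp
      (fun a ha => hdeg a (hG₀sub a ha))
    set L := (G₁ ×ˢ G₀).image (fun p => p.1 ⊔ p.2) with hLdef
    have hLmem : ∀ c ∈ L, ∃ a ∈ G₁, ∃ b ∈ G₀, c = a ⊔ b := by
      intro c hc
      obtain ⟨⟨a, b⟩, hab, rfl⟩ := Finset.mem_image.mp hc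
      obtain ⟨ha, hb⟩ := Finset.mem_product.mp hab
      exact ⟨a, ha, b, hb, rfl⟩
    have hLx : ∀ c ∈ L, c x = 1 := by
      intro c hc
      obtain ⟨a, ha, b, hb, rfl⟩ := hLmem c hc
      rw [Finsupp.sup_apply, hG₁x a ha, hG₀x b hb]
      simp
    have hLsq : ∀ c ∈ L, ∀ j, c j ≤ 1 := by
      intro c hc j
      obtain ⟨a, ha, b, hb, rfl⟩ := hLmem c hc
      rw [Finsupp.sup_apply]
      have := hsq a (hG₁sub a ha) j
      have := hsq b (hG₀sub b hb) j
      omega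
    have hLsupp : ∀ c ∈ L, c.support ⊆ V := by
      intro c hc
      obtain ⟨a, ha, b, hb, rfl⟩ := hLmem c hc
      rw [Finsupp.support_sup]
      exact Finset.union_subset (hsupp a (hG₁sub a ha)) (hsupp b (hG₀sub b hb))
    set L' := L.image (Finsupp.erase x) with hL'def
    have hL'deg : ∀ b ∈ L', 2 ≤ b.support.card := by
      intro b hb
      obtain ⟨c, hc, rfl⟩ := Finset.mem_image.mp hb
      obtain ⟨a, ha, b', hb', rfl⟩ := hLmem c hc
      rw [Finsupp.support_erase, Finsupp.support_sup]
      have hsub : b'.support ⊆ (a.support ∪ b'.support).erase x :=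
        Finset.subset_erase.mpr ⟨Finset.subset_union_right,
          Finsupp.notMem_support_iff.mpr (hG₀x b' hb')⟩
      have := Finset.card_le_card hsub
      have := hdeg b' (hG₀sub b' hb')
      omega
    have hL'pd := ih V' L' (by omega)
      (fun b hb j => by
        obtain ⟨c, hc, rfl⟩ := Finset.mem_image.mp hb
        exact erase_sqf (hLsq c hc) x j)
      (fun b hb => by
        obtain ⟨c, hc, rfl⟩ := Finset.mem_image.mp hb
        rw [Finsupp.support_erase]
        exact Finset.erase_subset_erase x (hLsupp c hc))
      hL'deg
    have hIpd : PdLe (MvPolynomial (Fin n) k) (V'.card - 2)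
        (ModuleCat.of _ (JJ k G₁ ⊓ JJ k G₀ : Ideal _)) := by
      rw [JJ_inf]
      exact JJ_factor_pd hLx hL'pd
    have hsum := pdLe_sup hIpd hApd hBpd
    have hJJG : JJ k G = JJ k G₁ ⊔ JJ k G₀ := by
      conv_lhs => rw [hGsplit]
      exact JJ_union _ _
    rw [hJJG]
    exact pdLe_mono (by omega) hsum

end MonomialInduction

/-- If `n ≥ 1` and `M` is a squarefree monomial ideal in `S = k[x_1,…,x_n]` whose generators
all have total degree at least `2` (e.g. an edge ideal), then `S/M` has projective dimension
at most `n - 1`, i.e. `S/M` admits a projective resolution of length at most `n - 1`. -/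
theorem pd_le_of_squarefree_deg_ge_two
    (k : Type*) [Field k] (n : ℕ) (hn : 1 ≤ n) (q : ℕ)
    (m : Fin q → (Fin n →₀ ℕ))
    (hsf : ∀ i j, m i j ≤ 1)
    (hdeg : ∀ i, 2 ≤ (m i).sum fun _ e => e)
    (M : Ideal (MvPolynomial (Fin n) k))
    (hM : M = Ideal.span (Set.range fun i => monomial (m i) (1 : k))) :
    ∃ P : CategoryTheory.ProjectiveResolution
        (ModuleCat.of (MvPolynomial (Fin n) k) (MvPolynomial (Fin n) k ⧸ M)),
      ∀ i, n - 1 < i → Limits.IsZero (P.complex.X i) := by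
  apply exists_projectiveResolution_of_pdLe
  have hsumcard : ∀ i : Fin q, ((m i).sum fun _ e => e) ≤ (m i).support.card := by
    intro i
    rw [Finsupp.sum]
    calc ∑ j ∈ (m i).support, m i j ≤ ∑ j ∈ (m i).support, 1 :=
          Finset.sum_le_sum (fun j _ => hsf i j)
      _ = (m i).support.card := by rw [Finset.sum_const, smul_eq_mul, mul_one]
  by_cases hM0 : M = ⊥
  · subst hM0
    exact pdLe_mono (Nat.zero_le _) (pdLe_of_linearEquiv 0
      (Submodule.quotEquivOfEqBot (⊥ : Ideal (MvPolynomial (Fin n) k)) rfl).symm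
      (pdLe_of_projective 0 (inferInstanceAs
        (Module.Projective (MvPolynomial (Fin n) k) (MvPolynomial (Fin n) k)))))
  · set G : Finset (Fin n →₀ ℕ) := Finset.image m Finset.univ with hG
    have hMG : M = JJ k G := by
      rw [hM, JJ]
      congr 1
      rw [hG, Finset.coe_image, Finset.coe_univ, Set.image_univ, ← Set.range_comp]
      rfl
    have hGsq : ∀ a ∈ G, ∀ j, a j ≤ 1 := by
      intro a ha j
      obtain ⟨i, _, rfl⟩ := Finset.mem_image.mp ha
      exact hsf i j
    have hGdeg : ∀ a ∈ G, 2 ≤ a.support.card := by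
      intro a ha
      obtain ⟨i, _, rfl⟩ := Finset.mem_image.mp ha
      have h1 := hdeg i
      have h2 := hsumcard i
      omega
    have hn2 : 2 ≤ n := by
      by_contra hlt
      apply hM0
      have hq : IsEmpty (Fin q) := by
        constructor
        intro i
        have h1 := hdeg i
        have h2 := hsumcard i
        have h3 : (m i).support.card ≤ n := by
          have := Finset.card_le_card (Finset.subset_univ ((m i).support))
          simpa using this
        omega
      rw [hM]
      have hr : (Set.range fun i => monomial (m i) (1:k)) = ∅ :=
        Set.range_eq_empty_iff.mpr hq
      rw [hr, Ideal.span_empty]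
    have hpdM : PdLe (MvPolynomial (Fin n) k) (n - 2)
        (ModuleCat.of (MvPolynomial (Fin n) k) (JJ k G)) := by
      have := pd_D (k := k) n Finset.univ G (by simp) hGsq
        (fun a _ => Finset.subset_univ _) hGdeg
      simpa using this
    rw [← hMG] at hpdM
    have hquot := pdLe_quot 0 (n-2) (Submodule.subtype M) (Submodule.mkQ M)
      (Submodule.injective_subtype M) (Submodule.mkQ_surjective M)
      (by rw [Submodule.ker_mkQ, Submodule.range_subtype]) hpdM
      (pdLe_of_projective 0 (inferInstanceAs
        (Module.Projective (MvPolynomial (Fin n) k) (MvPolynomial (Fin n) k))))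
    have hmax : max ((n-2)+1) 0 = n - 1 := by omega
    rwa [hmax] at hquot
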